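/- Let d ∈ {2,3} and s ∈ [0, 1/2]. There exists a constant C > 0, depending only on d and s, such that for all k, t > 0 with kt ≥ 1 and all measurable functions F, G : ℝ^d → [0, ∞), ∫_{{ξ : ‖ξ⁻‖ < kt/2 and |ξ_d| < kt/2}} (1 + ‖ξ‖²)^s · ((‖ξ⁻‖ + kt)² + ξ_d²)^{−1/2} · F(ξ) G(ξ) dξ ≤ C (kt)^{2s−1} ‖F‖_{L²(ℝ^d)} ‖G‖_{L²(ℝ^d)}. -/

import Mathlib

open MeasureTheory
open scoped ENNReal

/-- `‖ξ⁻‖`, the Euclidean norm of the first `d − 1` coordinates of `ξ ∈ ℝ^d`. -/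
noncomputable def xiMinusNorm {d : ℕ} (ξ : EuclideanSpace ℝ (Fin d)) : ℝ :=
  Real.sqrt (∑ i ∈ Finset.univ.filter (fun i : Fin d => (i : ℕ) < d - 1), ξ i ^ 2)

/-- `ξ_d`, the last coordinate of `ξ ∈ ℝ^d`. -/
noncomputable def xiLast {d : ℕ} (hd : 0 < d) (ξ : EuclideanSpace ℝ (Fin d)) : ℝ :=
  ξ ⟨d - 1, Nat.sub_lt hd one_pos⟩

/-! On the region `‖ξ⁻‖, |ξ_d| < kt/2` the weight is bounded pointwise: `1 + ‖ξ‖² ≤ 2 (kt)²`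
because `kt ≥ 1`, and `(‖ξ⁻‖ + kt)² + ξ_d² ≥ (kt)²`, so the weight is at most `2^s (kt)^(2s-1)`.
The estimate then follows from the Cauchy–Schwarz inequality `∫ F G ≤ ‖F‖₂ ‖G‖₂`. -/

lemma norm_sq_eq_xiMinusNorm_sq_add_xiLast_sq {d : ℕ} (hd : 0 < d) (ξ : EuclideanSpace ℝ (Fin d)) :
    ‖ξ‖ ^ 2 = xiMinusNorm ξ ^ 2 + xiLast hd ξ ^ 2 := by
  have h_last : Finset.univ.filter (fun i : Fin d => ¬ (i : ℕ) < d - 1) =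
      {⟨d - 1, Nat.sub_lt hd one_pos⟩} := by
    ext i
    simp only [Finset.mem_filter, Finset.mem_univ, true_and, Finset.mem_singleton, Fin.ext_iff]
    have := i.isLt
    omega
  rw [EuclideanSpace.norm_sq_eq, xiMinusNorm, Real.sq_sqrt (Finset.sum_nonneg fun i _ => sq_nonneg _),
    ← Finset.sum_filter_add_sum_filter_not Finset.univ (fun i : Fin d => (i : ℕ) < d - 1), h_last,
    Finset.sum_singleton]
  simp only [Real.norm_eq_abs, sq_abs, xiLast]

lemma one_add_sq_add_sq_rpow_le {a b K s : ℝ} (hK : 1 ≤ K) (hs : 0 ≤ s)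
    (ha : |a| ≤ K / 2) (hb : |b| ≤ K / 2) :
    (1 + (a ^ 2 + b ^ 2)) ^ s ≤ 2 ^ s * K ^ (2 * s) := by
  have ha2 : a ^ 2 ≤ (K / 2) ^ 2 := sq_le_sq' (abs_le.mp ha).1 (abs_le.mp ha).2
  have hb2 : b ^ 2 ≤ (K / 2) ^ 2 := sq_le_sq' (abs_le.mp hb).1 (abs_le.mp hb).2
  calc (1 + (a ^ 2 + b ^ 2)) ^ s ≤ (2 * K ^ 2) ^ s :=
        Real.rpow_le_rpow (by positivity) (by nlinarith) hs
    _ = 2 ^ s * K ^ (2 * s) := by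
        rw [Real.mul_rpow zero_le_two (by positivity), ← Real.rpow_natCast K 2,
          ← Real.rpow_mul (by linarith)]
        norm_num

lemma add_sq_add_sq_rpow_neg_half_le {a b K : ℝ} (hK : 0 < K) (ha : 0 ≤ a) :
    ((a + K) ^ 2 + b ^ 2) ^ (-(1 / 2) : ℝ) ≤ K ^ (-1 : ℝ) :=
  calc ((a + K) ^ 2 + b ^ 2) ^ (-(1 / 2) : ℝ) ≤ (K ^ 2) ^ (-(1 / 2) : ℝ) :=
        Real.rpow_le_rpow_of_nonpos (by positivity) (by nlinarith [sq_nonneg b]) (by norm_num)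
    _ = K ^ (-1 : ℝ) := by
        rw [← Real.rpow_natCast K 2, ← Real.rpow_mul hK.le]
        norm_num

lemma weight_le_of_xiMinusNorm_lt_of_abs_xiLast_lt {d : ℕ} (hd : 0 < d) {K s : ℝ} (hK : 1 ≤ K)
    (hs : 0 ≤ s) {ξ : EuclideanSpace ℝ (Fin d)} (h₁ : xiMinusNorm ξ < K / 2)
    (h₂ : |xiLast hd ξ| < K / 2) :
    (1 + ‖ξ‖ ^ 2) ^ s * ((xiMinusNorm ξ + K) ^ 2 + xiLast hd ξ ^ 2) ^ (-(1 / 2) : ℝ)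
      ≤ 2 ^ s * K ^ (2 * s - 1) := by
  have ha : 0 ≤ xiMinusNorm ξ := Real.sqrt_nonneg _
  calc (1 + ‖ξ‖ ^ 2) ^ s * ((xiMinusNorm ξ + K) ^ 2 + xiLast hd ξ ^ 2) ^ (-(1 / 2) : ℝ)
      ≤ (2 ^ s * K ^ (2 * s)) * K ^ (-1 : ℝ) := by
        rw [norm_sq_eq_xiMinusNorm_sq_add_xiLast_sq hd]
        gcongr
        · exact one_add_sq_add_sq_rpow_le hK hs (by rw [abs_of_nonneg ha]; exact h₁.le) h₂.le
        · exact add_sq_add_sq_rpow_neg_half_le (by linarith) ha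
    _ = 2 ^ s * K ^ (2 * s - 1) := by
        rw [mul_assoc, ← Real.rpow_add (by linarith), ← sub_eq_add_neg]

lemma lintegral_ofReal_mul_ofReal_le_L2_mul_L2 {α : Type*} [MeasurableSpace α] {μ : Measure α}
    {f g : α → ℝ} (hf : AEMeasurable f μ) (hg : AEMeasurable g μ) :
    ∫⁻ x, ENNReal.ofReal (f x) * ENNReal.ofReal (g x) ∂μ
      ≤ (∫⁻ x, ENNReal.ofReal (f x ^ 2) ∂μ) ^ (1 / 2 : ℝ)
        * (∫⁻ x, ENNReal.ofReal (g x ^ 2) ∂μ) ^ (1 / 2 : ℝ) := by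
  have ofReal_rpow_two_le : ∀ y : ℝ, ENNReal.ofReal y ^ (2 : ℝ) ≤ ENNReal.ofReal (y ^ 2) := by
    intro y
    rcases le_total 0 y with hy | hy
    · rw [ENNReal.rpow_two, ENNReal.ofReal_pow hy]
    · simp [ENNReal.ofReal_of_nonpos hy]
  calc ∫⁻ x, ENNReal.ofReal (f x) * ENNReal.ofReal (g x) ∂μ
      ≤ (∫⁻ x, ENNReal.ofReal (f x) ^ (2 : ℝ) ∂μ) ^ (1 / 2 : ℝ)
        * (∫⁻ x, ENNReal.ofReal (g x) ^ (2 : ℝ) ∂μ) ^ (1 / 2 : ℝ) :=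
        ENNReal.lintegral_mul_le_Lp_mul_Lq μ Real.HolderConjugate.two_two
          hf.ennreal_ofReal hg.ennreal_ofReal
    _ ≤ _ := by gcongr with x x <;> exact ofReal_rpow_two_le _


lemma setLIntegral_ofReal_mul_mul_le {α : Type*} [MeasurableSpace α] {μ : Measure α} {S : Set α}
    {w f g : α → ℝ} {c : ℝ} (hw : ∀ x ∈ S, w x ≤ c) (hf : Measurable f) (hg : Measurable g)
    (hf₀ : ∀ x, 0 ≤ f x) (hg₀ : ∀ x, 0 ≤ g x) :
    ∫⁻ x in S, ENNReal.ofReal (w x * f x * g x) ∂μ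
      ≤ ENNReal.ofReal c * (∫⁻ x, ENNReal.ofReal (f x ^ 2) ∂μ) ^ (1 / 2 : ℝ)
        * (∫⁻ x, ENNReal.ofReal (g x ^ 2) ∂μ) ^ (1 / 2 : ℝ) := by
  have hfg : Measurable fun x => ENNReal.ofReal (f x) * ENNReal.ofReal (g x) :=
    hf.ennreal_ofReal.mul hg.ennreal_ofReal
  calc ∫⁻ x in S, ENNReal.ofReal (w x * f x * g x) ∂μ
      ≤ ∫⁻ x in S, ENNReal.ofReal c * (ENNReal.ofReal (f x) * ENNReal.ofReal (g x)) ∂μ := by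
        refine setLIntegral_mono (measurable_const.mul hfg) fun x hx => ?_
        rw [← ENNReal.ofReal_mul (hf₀ x), ← ENNReal.ofReal_mul' (mul_nonneg (hf₀ x) (hg₀ x)),
          mul_assoc]
        exact ENNReal.ofReal_le_ofReal
          (mul_le_mul_of_nonneg_right (hw x hx) (mul_nonneg (hf₀ x) (hg₀ x)))
    _ ≤ ∫⁻ x, ENNReal.ofReal c * (ENNReal.ofReal (f x) * ENNReal.ofReal (g x)) ∂μ :=
        setLIntegral_le_lintegral _ _
    _ = ENNReal.ofReal c * ∫⁻ x, ENNReal.ofReal (f x) * ENNReal.ofReal (g x) ∂μ :=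
        lintegral_const_mul _ hfg
    _ ≤ _ := by
        rw [mul_assoc]
        gcongr
        exact lintegral_ofReal_mul_ofReal_le_L2_mul_L2 hf.aemeasurable hg.aemeasurable

/-- Estimate of the term `I₂`, over the region `{‖ξ⁻‖ < kt/2, |ξ_d| < kt/2}` in the unique continuation
argument for the Helmholtz equation with a random potential. -/
theorem stmt_5 (d : ℕ) (hd : d = 2 ∨ d = 3) (s : ℝ) (hs : 0 ≤ s) :
    ∃ C > (0 : ℝ), ∀ k t : ℝ, 0 < k → 0 < t → 1 ≤ k * t →
      ∀ F G : EuclideanSpace ℝ (Fin d) → ℝ, Measurable F → Measurable G →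
        (∀ ξ, 0 ≤ F ξ) → (∀ ξ, 0 ≤ G ξ) →
        (∫⁻ ξ in {ξ | xiMinusNorm ξ < k * t / 2 ∧ |xiLast (by omega) ξ| < k * t / 2},
            ENNReal.ofReal ((1 + ‖ξ‖ ^ 2) ^ s
              * ((xiMinusNorm ξ + k * t) ^ 2 + xiLast (by omega) ξ ^ 2) ^ (-(1 / 2) : ℝ)
              * F ξ * G ξ)) ≤
          ENNReal.ofReal (C * (k * t) ^ (2 * s - 1))
            * (∫⁻ ξ, ENNReal.ofReal (F ξ ^ 2)) ^ (1 / 2 : ℝ)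
            * (∫⁻ ξ, ENNReal.ofReal (G ξ ^ 2)) ^ (1 / 2 : ℝ) := by
  refine ⟨2 ^ s, by positivity, fun k t _ _ hkt F G hF hG hF₀ hG₀ => ?_⟩
  exact setLIntegral_ofReal_mul_mul_le
    (fun ξ hξ => weight_le_of_xiMinusNorm_lt_of_abs_xiLast_lt (by omega) hkt hs hξ.1 hξ.2) hF hG hF₀ hG₀
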